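/- For every d ∈ ℕ with d ≥ 1 and every hypergraph H, disc(Δ^d H, 2) ≤ disc(H, 2). -/

import Mathlib

/-- The Stirling numbers of the second kind: `stirling2 d k` is the number of
partitions of a `d`-element set into `k` nonempty parts. -/
def stirling2 : ℕ → ℕ → ℕ
  | 0, 0 => 1
  | 0, _ + 1 => 0
  | _ + 1, 0 => 0
  | d + 1, k + 1 => (k + 1) * stirling2 d (k + 1) + stirling2 d k

/-- The discrepancy of a `c`-coloring `χ` of the hypergraph with edge set `H`. -/
noncomputable def discCol {V : Type} (H : Finset (Finset V)) (c : ℕ) (χ : V → Fin c) : ℝ :=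
  ⨆ E ∈ H, ⨆ i : Fin c, |((E.filter fun v => χ v = i).card : ℝ) - (E.card : ℝ) / (c : ℝ)|

/-- The `c`-color discrepancy of the hypergraph with edge set `H`. -/
noncomputable def disc {V : Type} (H : Finset (Finset V)) (c : ℕ) : ℝ :=
  ⨅ χ : V → Fin c, discCol H c χ

/-- The `d`-fold symmetric product of a hypergraph: edge set `{E^d : E ∈ H}`
on the vertex set `V^d`. -/
def symProd {V : Type} [DecidableEq V] (H : Finset (Finset V)) (d : ℕ) :
    Finset (Finset (Fin d → V)) :=
  H.image fun E => Fintype.piFinset fun _ : Fin d => E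

/-! Fix a linear order on `V` and a base index `i₀`. A coloring `χ` of `V` induces a coloring of
`V^d`: a constant tuple `(v, …, v)` gets the color `χ v`, and a nonconstant tuple `t` gets its
color by comparing `t i₀` with another value `t j` of `t`. Swapping these two values throughout
`t` is an involution on the nonconstant tuples of every `E^d` that reverses that comparison, so
the nonconstant tuples of `E^d` are split exactly in half. Hence each color class of `E^d`
deviates from `|E|^d / 2` by exactly as much as the corresponding class of `E` deviates from
`|E| / 2`, and the discrepancy does not increase. -/

open Finset

section Discrepancy

variable {V W : Type} {c : ℕ}

theorem bddAbove_range_iSup_mem {α : Type*} (s : Finset α) (g : α → ℝ) :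
    BddAbove (Set.range fun a => ⨆ _ : a ∈ s, g a) := by
  refine ((s.finite_toSet.image g).insert 0).bddAbove.mono ?_
  rintro _ ⟨a, rfl⟩
  by_cases ha : a ∈ s
  · simpa [ha] using Or.inr ⟨a, ha, rfl⟩
  · simp [ha]

theorem discCol_nonneg (H : Finset (Finset V)) (χ : V → Fin c) : 0 ≤ discCol H c χ :=
  Real.iSup_nonneg fun _ => Real.iSup_nonneg fun _ => Real.iSup_nonneg fun _ => abs_nonneg _

theorem abs_le_discCol {H : Finset (Finset V)} (χ : V → Fin c) {E : Finset V} (hE : E ∈ H)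
    (i : Fin c) :
    |((E.filter fun v => χ v = i).card : ℝ) - (E.card : ℝ) / (c : ℝ)| ≤ discCol H c χ := by
  refine le_ciSup_of_le (bddAbove_range_iSup_mem H _) E ?_
  rw [ciSup_pos hE]
  exact le_ciSup (f := fun j => |((E.filter fun v => χ v = j).card : ℝ) - E.card / c|)
    (Set.finite_range _).bddAbove i

theorem discCol_le {H : Finset (Finset V)} {χ : V → Fin c} {t : ℝ} (ht : 0 ≤ t)
    (h : ∀ E ∈ H, ∀ i : Fin c,
      |((E.filter fun v => χ v = i).card : ℝ) - (E.card : ℝ) / (c : ℝ)| ≤ t) :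
    discCol H c χ ≤ t :=
  Real.iSup_le (fun E => Real.iSup_le (fun hE => Real.iSup_le (h E hE) ht) ht) ht

theorem disc_le_of_forall_exists_discCol_le [NeZero c] {H : Finset (Finset V)}
    {H' : Finset (Finset W)}
    (h : ∀ χ : V → Fin c, ∃ χ' : W → Fin c, discCol H' c χ' ≤ discCol H c χ) :
    disc H' c ≤ disc H c :=
  le_ciInf fun χ =>
    let ⟨χ', hχ'⟩ := h χ
    (ciInf_le ⟨0, by rintro _ ⟨ψ, rfl⟩; exact discCol_nonneg H' ψ⟩ χ').trans hχ'

end Discrepancy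

section Counting

variable {α : Type*}

theorem two_mul_card_filter_eq_card_of_involution {s : Finset α} {χ : α → Fin 2}
    (σ : α → α) (hσ : ∀ a ∈ s, σ a ∈ s) (hσσ : ∀ a ∈ s, σ (σ a) = a)
    (hχ : ∀ a ∈ s, χ (σ a) ≠ χ a) (i : Fin 2) :
    2 * #(s.filter (χ · = i)) = #s := by
  have two_colors : ∀ x y j : Fin 2, x ≠ y → y ≠ j → x = j := by decide
  have hswap : #(s.filter (χ · = i)) = #(s.filter (¬ χ · = i)) := by
    refine card_bij' (fun a _ => σ a) (fun a _ => σ a) ?_ ?_ ?_ ?_ <;>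
      simp only [mem_filter, and_imp]
    · exact fun a ha hai => ⟨hσ a ha, hai ▸ hχ a ha⟩
    · exact fun a ha hai => ⟨hσ a ha, two_colors _ _ _ (hχ a ha) hai⟩
    · exact fun a ha _ => hσσ a ha
    · exact fun a ha _ => hσσ a ha
  rw [two_mul]
  nth_rewrite 2 [hswap]
  exact card_filter_add_card_filter_not _

theorem card_filter_sub_half_eq_of_balanced_compl (s : Finset α) (p q : α → Prop)
    [DecidablePred p] [DecidablePred q]
    (hbal : 2 * #((s.filter (¬ q ·)).filter p) = #(s.filter (¬ q ·))) :
    (#(s.filter p) : ℝ) - #s / 2 = #((s.filter q).filter p) - #(s.filter q) / 2 := by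
  have hsplit : #(s.filter p) = #((s.filter q).filter p) + #((s.filter (¬ q ·)).filter p) := by
    rw [filter_comm, filter_comm (p := (¬ q ·))]
    exact (card_filter_add_card_filter_not _).symm
  rw [hsplit, ← card_filter_add_card_filter_not (s := s) q, ← hbal]
  push_cast
  ring

end Counting

section ValueSwap

variable {ι V : Type*} (i₀ : ι)

/-- Chosen as a function of the set `{k | t k ≠ t i₀}` alone, so that `valueSwap` does not
change it. -/
noncomputable def partnerIndex (t : ι → V) : ι :=
  @Classical.epsilon ι ⟨i₀⟩ fun k => t k ≠ t i₀

variable {i₀}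

theorem partnerIndex_spec {t : ι → V} (ht : ¬ ∀ k, t k = t i₀) :
    t (partnerIndex i₀ t) ≠ t i₀ := by
  push Not at ht
  exact @Classical.epsilon_spec ι (fun k => t k ≠ t i₀) ht

variable [DecidableEq V]

variable (i₀) in
noncomputable def valueSwap (t : ι → V) : ι → V :=
  Equiv.swap (t i₀) (t (partnerIndex i₀ t)) ∘ t

theorem valueSwap_apply_eq_iff (t : ι → V) (k : ι) :
    valueSwap i₀ t k = valueSwap i₀ t i₀ ↔ t k = t i₀ :=
  (Equiv.injective _).eq_iff

theorem partnerIndex_valueSwap (t : ι → V) :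
    partnerIndex i₀ (valueSwap i₀ t) = partnerIndex i₀ t := by
  simp only [partnerIndex, ne_eq, valueSwap_apply_eq_iff]

theorem valueSwap_apply_self (t : ι → V) : valueSwap i₀ t i₀ = t (partnerIndex i₀ t) :=
  Equiv.swap_apply_left _ _

theorem valueSwap_apply_partnerIndex (t : ι → V) :
    valueSwap i₀ t (partnerIndex i₀ t) = t i₀ :=
  Equiv.swap_apply_right _ _

theorem valueSwap_valueSwap (t : ι → V) : valueSwap i₀ (valueSwap i₀ t) = t := by
  ext k
  rw [valueSwap, partnerIndex_valueSwap, valueSwap_apply_self, valueSwap_apply_partnerIndex,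
    Equiv.swap_comm]
  exact Equiv.swap_apply_self _ _ _

theorem valueSwap_mem_piFinset [Fintype ι] [DecidableEq ι] {E : Finset V} {t : ι → V}
    (ht : t ∈ Fintype.piFinset fun _ => E) : valueSwap i₀ t ∈ Fintype.piFinset fun _ => E := by
  rw [Fintype.mem_piFinset] at ht ⊢
  intro k
  rw [valueSwap, Function.comp_apply, Equiv.swap_apply_def]
  split_ifs <;> apply ht

end ValueSwap

section ProductColoring

variable {ι V : Type*} [Fintype ι] [LinearOrder V] {i₀ : ι}

theorem filter_piFinset_forall_eq_eq_image [DecidableEq ι] (E : Finset V) :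
    (Fintype.piFinset fun _ : ι => E).filter (fun t => ∀ k, t k = t i₀)
      = E.image (Function.const ι) := by
  ext t
  simp only [mem_filter, mem_image, Fintype.mem_piFinset]
  constructor
  · rintro ⟨htE, ht⟩
    exact ⟨t i₀, htE i₀, funext fun k => (ht k).symm⟩
  · rintro ⟨v, hv, rfl⟩
    exact ⟨fun _ => hv, fun _ => rfl⟩

variable (i₀) in
noncomputable def productColoring (χ : V → Fin 2) (t : ι → V) : Fin 2 :=
  if ∀ k, t k = t i₀ then χ (t i₀) else if t i₀ < t (partnerIndex i₀ t) then 0 else 1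

theorem productColoring_const (χ : V → Fin 2) (v : V) :
    productColoring i₀ χ (Function.const ι v) = χ v :=
  if_pos fun _ => rfl

theorem productColoring_valueSwap_ne (χ : V → Fin 2) {t : ι → V} (ht : ¬ ∀ k, t k = t i₀) :
    productColoring i₀ χ (valueSwap i₀ t) ≠ productColoring i₀ χ t := by
  have hst : ¬ ∀ k, valueSwap i₀ t k = valueSwap i₀ t i₀ := by
    simpa only [valueSwap_apply_eq_iff] using ht
  rw [productColoring, productColoring, if_neg ht, if_neg hst, partnerIndex_valueSwap,
    valueSwap_apply_self, valueSwap_apply_partnerIndex]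
  rcases (partnerIndex_spec ht).lt_or_gt with h | h <;> simp [h, h.not_gt]

theorem card_filter_productColoring_sub_half [DecidableEq ι] (χ : V → Fin 2) (E : Finset V) (i : Fin 2) :
    (#((Fintype.piFinset fun _ : ι => E).filter (productColoring i₀ χ · = i)) : ℝ)
        - #(Fintype.piFinset fun _ : ι => E) / 2 = #(E.filter (χ · = i)) - #E / 2 := by
  have : Nonempty ι := ⟨i₀⟩
  have hbal := two_mul_card_filter_eq_card_of_involution
    (s := (Fintype.piFinset fun _ : ι => E).filter fun t => ¬ ∀ k, t k = t i₀) (valueSwap i₀)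
    (fun t ht => by
      simp only [mem_filter, valueSwap_apply_eq_iff] at ht ⊢
      exact ⟨valueSwap_mem_piFinset ht.1, ht.2⟩)
    (fun t _ => valueSwap_valueSwap t)
    (fun t ht => productColoring_valueSwap_ne χ (mem_filter.mp ht).2) i
  rw [card_filter_sub_half_eq_of_balanced_compl _ _ _ hbal, filter_piFinset_forall_eq_eq_image,
    filter_image, card_image_of_injective _ Function.const_injective,
    card_image_of_injective _ Function.const_injective]
  simp only [productColoring_const]

end ProductColoring

theorem stmt10_general (d : ℕ) (hd : 1 ≤ d)
    (V : Type) [DecidableEq V] (H : Finset (Finset V)) :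
    disc (symProd H d) 2 ≤ disc H 2 := by
  let : LinearOrder V := IsWellOrder.linearOrder WellOrderingRel
  refine disc_le_of_forall_exists_discCol_le fun χ => ⟨productColoring ⟨0, hd⟩ χ, ?_⟩
  refine discCol_le (discCol_nonneg H χ) fun _ hEd i => ?_
  obtain ⟨E, hE, rfl⟩ := mem_image.mp hEd
  simpa only [Nat.cast_ofNat, card_filter_productColoring_sub_half] using abs_le_discCol χ hE i

/-- For every `d ≥ 1` and every hypergraph `H`, `disc(Δ^d H, 2) ≤ disc(H, 2)`. -/
theorem stmt10 (d : ℕ) (hd : 1 ≤ d)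
    (V : Type) [Fintype V] [DecidableEq V] (H : Finset (Finset V)) :
    disc (symProd H d) 2 ≤ disc H 2 :=
  stmt10_general d hd V H
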